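/- arXiv:solv-int/9909006 — 6 statements merged into one kernel-verified Lean document; each statement's English description precedes it below -/
import Mathlib

section
/- Let R be a commutative ring with a bracket B : R × R → R that is additive in each argument, antisymmetric, and satisfies the Leibniz rule. Let I_1,…,I_n, J_1,…,J_n ∈ R satisfy B(I_j, I_k) = 0, B(J_j, J_k) = 0 and B(I_j − J_j, I_k − J_k) = 0 for all j,k. Fix an index m and suppose J_m is invertible, with inverse u (J_m·u = 1). Set K_m = I_m·u. Then for every index j one has B(K_m, K_m·J_j − I_j) = 0. -/
/-- In a commutative ring with an additive, antisymmetric bracket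
satisfying the Leibniz rule, given two families of integrals in involution whose
differences are also in involution, and an invertible `J m` with inverse `u`,
the element `K_m = I_m * u` Poisson-commutes with every `K_j = K_m * J j - I j`. -/
theorem stmt_0 {R : Type*} [CommRing R] (n : ℕ) (B : R → R → R)
    (hBaddL : ∀ x y z : R, B (x + y) z = B x z + B y z)
    (hBaddR : ∀ x y z : R, B x (y + z) = B x y + B x z)
    (hBanti : ∀ x y : R, B x y = - B y x)
    (hBleib : ∀ x y z : R, B (x * y) z = x * B y z + y * B x z)
    (I J : Fin n → R)
    (hI : ∀ j k, B (I j) (I k) = 0)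
    (hJ : ∀ j k, B (J j) (J k) = 0)
    (hIJ : ∀ j k, B (I j - J j) (I k - J k) = 0)
    (m : Fin n) (u : R) (hu : J m * u = 1) :
    ∀ j, B (I m * u) (I m * u * J j - I j) = 0 := by
  intro j
  -- B 1 z = 0
  have h1 : ∀ z : R, B 1 z = 0 := by
    intro z
    have h := hBleib 1 1 z
    rw [one_mul] at h
    linear_combination -h
  -- subtraction lemmas
  have hsubL : ∀ x y z : R, B (x - y) z = B x z - B y z := by
    intro x y z
    have h := hBaddL (x - y) y z
    rw [sub_add_cancel] at h
    linear_combination -h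
  have hsubR : ∀ x y z : R, B x (y - z) = B x y - B x z := by
    intro x y z
    have h := hBaddR x (y - z) z
    rw [sub_add_cancel] at h
    linear_combination -h
  -- Leibniz in the right argument
  have hleibR : ∀ x y z : R, B x (y * z) = y * B x z + z * B x y := by
    intro x y z
    rw [hBanti x (y * z), hBleib, hBanti z x, hBanti y x]
    ring
  -- bracket with u
  have hu' : ∀ z : R, B u z = -(u * u) * B (J m) z := by
    intro z
    have h := hBleib (J m) u z
    rw [hu, h1 z] at h
    linear_combination (-u) * h - B u z * hu
  -- key symmetry
  have key : B (I j) (J m) = B (I m) (J j) := by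
    have h := hIJ j m
    rw [hsubL, hsubR, hsubR, hI, hJ, hBanti (J j) (I m)] at h
    linear_combination -h
  -- auxiliary computations
  have e4 : B u (J j) = 0 := by rw [hu', hJ]; ring
  have hBuu : B u u = 0 := by
    rw [hu' u, hBanti (J m) u, hu' (J m), hJ]; ring
  have e5 : B (I m * u) (I m * u) = 0 := by
    rw [hleibR (I m * u) (I m) u, hBleib (I m) u u, hBleib (I m) u (I m),
      hBuu, hI, hBanti (I m) u]
    ring
  have e6 : B (I m * u) (I j) = I m * B u (I j) := by
    rw [hBleib, hI]; ring
  have e7 : B u (I j) = (u * u) * B (I j) (J m) := by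
    rw [hu', hBanti (J m) (I j)]; ring
  have e3 : B (I m * u) (J j) = I m * B u (J j) + u * B (I m) (J j) := hBleib _ _ _
  rw [hsubR, hleibR (I m * u) (I m * u) (J j), e3, e4, e5, e6, e7]
  linear_combination (-(I m * u * u)) * key
end

section
/- Let R be a commutative ring with a bracket B : R × R → R that is additive in each argument, antisymmetric, and satisfies the Leibniz rule. Let I_1,…,I_n, J_1,…,J_n ∈ R satisfy B(I_j, I_k) = 0, B(J_j, J_k) = 0 and B(I_j − J_j, I_k − J_k) = 0 for all j,k. Fix an index m with J_m invertible, inverse u, and set K_m = I_m·u and K_j = K_m·J_j − I_j for each j. Then B(K_j, K_k) = 0 for all indices j, k. -/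
/-- With the same hypotheses as Statement 0, the whole new family
`K m = I m * u`, `K j = (I m * u) * J j - I j` (for `j ≠ m`) is in involution. -/
theorem stmt_1 {R : Type*} [CommRing R] (n : ℕ) (B : R → R → R)
    (hBaddL : ∀ x y z : R, B (x + y) z = B x z + B y z)
    (hBaddR : ∀ x y z : R, B x (y + z) = B x y + B x z)
    (hBanti : ∀ x y : R, B x y = - B y x)
    (hBleib : ∀ x y z : R, B (x * y) z = x * B y z + y * B x z)
    (I J : Fin n → R)
    (hI : ∀ j k, B (I j) (I k) = 0)
    (hJ : ∀ j k, B (J j) (J k) = 0)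
    (hIJ : ∀ j k, B (I j - J j) (I k - J k) = 0)
    (m : Fin n) (u : R) (hu : J m * u = 1)
    (K : Fin n → R)
    (hKm : K m = I m * u)
    (hKj : ∀ j, j ≠ m → K j = I m * u * J j - I j) :
    ∀ j k, B (K j) (K k) = 0 := by
  -- basic linearity consequences
  have hB0 : ∀ x : R, B 0 x = 0 := by
    intro x
    have h := hBaddL 0 0 x
    rw [add_zero] at h
    linear_combination -h
  have hBneg : ∀ x y : R, B (-x) y = - B x y := by
    intro x y
    have h := hBaddL x (-x) y
    rw [add_neg_cancel, hB0] at h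
    linear_combination -h
  have hsubL : ∀ x y z : R, B (x - y) z = B x z - B y z := by
    intro x y z
    rw [sub_eq_add_neg, hBaddL, hBneg]; ring
  have hsubR : ∀ x y z : R, B x (y - z) = B x y - B x z := by
    intro x y z
    rw [hBanti, hsubL, hBanti x y, hBanti x z]; ring
  have hB1 : ∀ x : R, B 1 x = 0 := by
    intro x
    have h := hBleib 1 1 x
    rw [one_mul] at h
    linear_combination -h
  -- the cross bracket and its symmetry
  have hJI : ∀ j k, B (J j) (I k) = - B (I j) (J k) := by
    intro j k
    have h := hIJ j k
    rw [hsubL, hsubR, hsubR, hI j k, hJ j k] at h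
    linear_combination -h
  have hsym : ∀ j k, B (I k) (J j) = B (I j) (J k) := by
    intro j k
    have h1 := hJI j k
    rw [hBanti] at h1
    linear_combination -h1
  -- brackets with u
  have hBu : ∀ x : R, B u x = -(u*u) * B (J m) x := by
    intro x
    have h := hB1 x
    rw [← hu, hBleib] at h
    linear_combination u * h - B u x * hu
  have hUI : ∀ k, B u (I k) = u * u * B (I m) (J k) := by
    intro k
    rw [hBu, hJI]; ring
  have hUJ : ∀ k, B u (J k) = 0 := by
    intro k
    rw [hBu, hJ]; ring
  -- brackets with P = I m * u
  have hPJ : ∀ k, B (I m * u) (J k) = u * B (I m) (J k) := by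
    intro k
    rw [hBleib, hUJ]; ring
  have hPI : ∀ k, B (I m * u) (I k) = I m * (u * u) * B (I m) (J k) := by
    intro k
    rw [hBleib, hUI, hI]; ring
  have hPP : B (I m * u) (I m * u) = 0 := by
    have h1 : B u (I m * u) = u * u * (u * B (I m) (J m)) := by
      rw [hBu, hBanti (J m) (I m * u), hPJ]; ring
    have h2 : B (I m) (I m * u) = -(I m * (u * u) * B (I m) (J m)) := by
      rw [hBanti, hPI]
    rw [hBleib, h1, h2]; ring
  have hPPJ : ∀ k, B (I m * u) (I m * u * J k) = I m * u * (u * B (I m) (J k)) := by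
    intro k
    rw [hBanti (I m * u) (I m * u * J k), hBleib (I m * u) (J k), hPP,
      hBanti (J k) (I m * u), hPJ]
    ring
  have hPK : ∀ k, k ≠ m → B (I m * u) (K k) = 0 := by
    intro k hk
    rw [hKj k hk, hsubR, hPPJ k, hPI k]; ring
  intro j k
  rcases eq_or_ne j m with hj | hj
  · rcases eq_or_ne k m with hk | hk
    · rw [hj, hk, hKm]; exact hPP
    · rw [hj, hKm]; exact hPK k hk
  · rcases eq_or_ne k m with hk | hk
    · rw [hk, hKm, hBanti, hPK j hj, neg_zero]
    · rw [hKj j hj, hKj k hk, hsubL, hsubR, hsubR, hI j k,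
        hBleib (I m * u) (J j) (I m * u * J k), hBleib (I m * u) (J j) (I k),
        hBanti (J j) (I m * u * J k), hBanti (I j) (I m * u * J k),
        hBleib (I m * u) (J k) (J j), hBleib (I m * u) (J k) (I j),
        hJ k j, hPJ j, hJI k j, hsym j k, hPI j, hJI j k, hPI k, hPPJ k]
      ring
end

section
/- Let s_{kj} : ℝ → ℝ (1 ≤ k,j ≤ n) be smooth functions such that for every q ∈ ℝ^n the Stäckel matrix S(q), with entries S(q)_{kj} = s_{kj}(q_j), is invertible, and let c_{jk}(q) = (S(q)^{-1})_{jk}. Let U_1,…,U_n : ℝ → ℝ be smooth, and define the Stäckel integrals I_k(p,q) = Σ_{j=1}^n c_{jk}(q)·(p_j² + U_j(q_j)) for k = 1,…,n. Then the I_k are pairwise in involution with respect to the canonical Poisson bracket: {I_k, I_l} = 0 everywhere on ℝ^n × ℝ^n, for all k, l. -/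
/-- The canonical Poisson bracket on the phase space `(Fin n → ℝ) × (Fin n → ℝ)`
with coordinates `(p, q)`. -/
noncomputable def pbracket {n : ℕ} (f g : (Fin n → ℝ) × (Fin n → ℝ) → ℝ)
    (z : (Fin n → ℝ) × (Fin n → ℝ)) : ℝ :=
  ∑ i : Fin n,
    (fderiv ℝ f z (Pi.single i 1, 0) * fderiv ℝ g z (0, Pi.single i 1)
      - fderiv ℝ f z (0, Pi.single i 1) * fderiv ℝ g z (Pi.single i 1, 0))

private lemma stackel_key (n : ℕ) (s : Fin n → Fin n → ℝ → ℝ)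
    (hs : ∀ k j, ContDiff ℝ (⊤ : ℕ∞) (s k j))
    (S : (Fin n → ℝ) → Matrix (Fin n) (Fin n) ℝ)
    (hS : ∀ q k j, S q k j = s k j (q j))
    (hinv : ∀ q : Fin n → ℝ, IsUnit (S q).det)
    (c : (Fin n → ℝ) → Fin n → Fin n → ℝ)
    (hc : ∀ q j k, c q j k = (S q)⁻¹ j k)
    (hcdiff : ∀ a b, Differentiable ℝ fun q => c q a b)
    (q : Fin n → ℝ) (i a m : Fin n) :
    fderiv ℝ (fun q' => c q' a m) q (Pi.single i 1)
      = c q i m * (-(∑ r, c q a r * deriv (s r i) (q i))) := by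
  classical
  have hsq : ∀ r j, HasFDerivAt (fun q' : Fin n → ℝ => s r j (q' j))
      ((deriv (s r j) (q j)) • (ContinuousLinearMap.proj j : (Fin n → ℝ) →L[ℝ] ℝ)) q := fun r j =>
    (((hs r j).differentiable (by simp) (q j)).hasDerivAt).comp_hasFDerivAt q
      ((ContinuousLinearMap.proj j : (Fin n → ℝ) →L[ℝ] ℝ)).hasFDerivAt
  have hconstfun : ∀ r m', (fun q' : Fin n → ℝ => ∑ j, s r j (q' j) * c q' j m')
      = fun _ => (1 : Matrix (Fin n) (Fin n) ℝ) r m' := by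
    intro r m'
    funext q'
    have h1 := Matrix.mul_nonsing_inv (S q') (hinv q')
    calc ∑ j, s r j (q' j) * c q' j m' = ((S q') * (S q')⁻¹) r m' := by
          rw [Matrix.mul_apply]
          exact Finset.sum_congr rfl fun j _ => by rw [hS, hc]
      _ = (1 : Matrix (Fin n) (Fin n) ℝ) r m' := by rw [h1]
  have hterm : ∀ r m', HasFDerivAt (fun q' => ∑ j, s r j (q' j) * c q' j m')
      (∑ j, ((s r j (q j)) • (fderiv ℝ (fun q' => c q' j m') q)
        + (c q j m') • ((deriv (s r j) (q j)) • (ContinuousLinearMap.proj j)))) q :=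
    fun r m' => HasFDerivAt.fun_sum fun j _ =>
      (hsq r j).mul ((hcdiff j m' q).hasFDerivAt)
  have hzero : ∀ r m', (∑ j, ((s r j (q j)) • (fderiv ℝ (fun q' => c q' j m') q)
        + (c q j m') • ((deriv (s r j) (q j)) • (ContinuousLinearMap.proj j
          : (Fin n → ℝ) →L[ℝ] ℝ)))) = 0 := by
    intro r m'
    have h1 := hterm r m'
    rw [hconstfun r m'] at h1
    exact h1.unique (hasFDerivAt_const _ _)
  have heval : ∀ r m', ∑ j, s r j (q j) * (fderiv ℝ (fun q' => c q' j m') q (Pi.single i 1))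
      = -(c q i m' * deriv (s r i) (q i)) := by
    intro r m'
    have h2 := congrArg (fun (L : (Fin n → ℝ) →L[ℝ] ℝ) => L (Pi.single i 1)) (hzero r m')
    simp only [ContinuousLinearMap.sum_apply, ContinuousLinearMap.add_apply,
      ContinuousLinearMap.smul_apply, ContinuousLinearMap.proj_apply,
      ContinuousLinearMap.zero_apply, smul_eq_mul, Pi.single_apply] at h2
    rw [Finset.sum_add_distrib] at h2
    simp only [mul_ite, mul_one, mul_zero, Finset.sum_ite_eq', Finset.mem_univ, if_true] at h2
    linarith [h2]
  -- matrix solve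
  set A := S q with hA
  set D : Matrix (Fin n) (Fin n) ℝ :=
    Matrix.of fun a' m' => fderiv ℝ (fun q' => c q' a' m') q (Pi.single i 1) with hD
  set E : Matrix (Fin n) (Fin n) ℝ :=
    Matrix.of fun r m' => -(c q i m' * deriv (s r i) (q i)) with hE
  have hAD : A * D = E := by
    ext r m'
    rw [Matrix.mul_apply]
    have := heval r m'
    simp only [hD, hE, Matrix.of_apply, hA, hS]
    exact this
  have hDeq : D = A⁻¹ * E := by
    rw [← hAD, ← Matrix.mul_assoc, Matrix.nonsing_inv_mul A (hinv q), Matrix.one_mul]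
  have hentry : D a m = ∑ r, A⁻¹ a r * E r m := by
    rw [hDeq, Matrix.mul_apply]
  simp only [hD, hE, Matrix.of_apply] at hentry
  rw [hentry]
  simp only [hA, ← hc, mul_neg, Finset.sum_neg_distrib, neg_inj, Finset.mul_sum]
  exact Finset.sum_congr rfl fun r _ => by ring

private lemma stackel_final (n : ℕ) (s : Fin n → Fin n → ℝ → ℝ)
    (U : Fin n → ℝ → ℝ) (hU : ∀ j, ContDiff ℝ (⊤ : ℕ∞) (U j))
    (c : (Fin n → ℝ) → Fin n → Fin n → ℝ)
    (hcdiff : ∀ a b, Differentiable ℝ fun q => c q a b)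
    (key : ∀ (q : Fin n → ℝ) (i a m : Fin n),
      fderiv ℝ (fun q' => c q' a m) q (Pi.single i 1)
        = c q i m * (-(∑ r, c q a r * deriv (s r i) (q i))))
    (I : Fin n → (Fin n → ℝ) × (Fin n → ℝ) → ℝ)
    (hI : ∀ k z, I k z = ∑ j, c z.2 j k * ((z.1 j) ^ 2 + U j (z.2 j)))
    (k l : Fin n) (z : (Fin n → ℝ) × (Fin n → ℝ)) :
    pbracket (I k) (I l) z = 0 := by
  classical
  set LA : Fin n → Fin n → ((Fin n → ℝ) × (Fin n → ℝ)) →L[ℝ] ℝ := fun j m =>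
    (fderiv ℝ (fun q' => c q' j m) z.2).comp
      (ContinuousLinearMap.snd ℝ (Fin n → ℝ) (Fin n → ℝ)) with hLA
  set LB : Fin n → ((Fin n → ℝ) × (Fin n → ℝ)) →L[ℝ] ℝ := fun j =>
    (2 * z.1 j ^ 1) • ((ContinuousLinearMap.proj j).comp
      (ContinuousLinearMap.fst ℝ (Fin n → ℝ) (Fin n → ℝ)))
    + (deriv (U j) (z.2 j)) • ((ContinuousLinearMap.proj j).comp
      (ContinuousLinearMap.snd ℝ (Fin n → ℝ) (Fin n → ℝ))) with hLB
  have hIf : ∀ m, HasFDerivAt (I m)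
      (∑ j, ((c z.2 j m) • LB j + (z.1 j ^ 2 + U j (z.2 j)) • LA j m)) z := by
    intro m
    have hrw : I m = fun w => ∑ j, c w.2 j m * ((w.1 j) ^ 2 + U j (w.2 j)) :=
      funext (hI m)
    rw [hrw]
    refine HasFDerivAt.fun_sum fun j _ => ?_
    have hAj : HasFDerivAt (fun w : (Fin n → ℝ) × (Fin n → ℝ) => c w.2 j m) (LA j m) z :=
      ((hcdiff j m z.2).hasFDerivAt).comp z hasFDerivAt_snd
    have hB1 : HasFDerivAt (fun w : (Fin n → ℝ) × (Fin n → ℝ) => (w.1 j) ^ 2)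
        ((2 * z.1 j ^ 1) • ((ContinuousLinearMap.proj j).comp
          (ContinuousLinearMap.fst ℝ (Fin n → ℝ) (Fin n → ℝ)))) z :=
      by
        have h := (hasDerivAt_pow 2 (z.1 j)).comp_hasFDerivAt z
          (((ContinuousLinearMap.proj j).comp
            (ContinuousLinearMap.fst ℝ (Fin n → ℝ) (Fin n → ℝ))).hasFDerivAt)
        exact h.congr_fderiv (by congr 1)
    have hB2 : HasFDerivAt (fun w : (Fin n → ℝ) × (Fin n → ℝ) => U j (w.2 j))
        ((deriv (U j) (z.2 j)) • ((ContinuousLinearMap.proj j).comp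
          (ContinuousLinearMap.snd ℝ (Fin n → ℝ) (Fin n → ℝ)))) z :=
      (((hU j).differentiable (by simp) (z.2 j)).hasDerivAt).comp_hasFDerivAt z
        (((ContinuousLinearMap.proj j).comp
          (ContinuousLinearMap.snd ℝ (Fin n → ℝ) (Fin n → ℝ))).hasFDerivAt)
    exact hAj.mul (hB1.add hB2)
  have hP : ∀ m i, fderiv ℝ (I m) z (Pi.single i 1, 0) = c z.2 i m * (2 * z.1 i) := by
    intro m i
    rw [(hIf m).fderiv]
    simp only [ContinuousLinearMap.sum_apply, ContinuousLinearMap.add_apply,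
      ContinuousLinearMap.smul_apply, ContinuousLinearMap.comp_apply,
      ContinuousLinearMap.proj_apply, ContinuousLinearMap.coe_fst',
      ContinuousLinearMap.coe_snd', hLA, hLB, smul_eq_mul, map_zero, mul_zero, add_zero,
      Pi.single_apply, pow_one]
    simp only [mul_ite, mul_one, mul_zero, Finset.sum_ite_eq', Finset.mem_univ, if_true]
  have hQ : ∀ m i, fderiv ℝ (I m) z (0, Pi.single i 1) =
      c z.2 i m * (deriv (U i) (z.2 i)
        + ∑ j, (z.1 j ^ 2 + U j (z.2 j)) * (-(∑ r, c z.2 j r * deriv (s r i) (z.2 i)))) := by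
    intro m i
    rw [(hIf m).fderiv]
    simp only [ContinuousLinearMap.sum_apply, ContinuousLinearMap.add_apply,
      ContinuousLinearMap.smul_apply, ContinuousLinearMap.comp_apply,
      ContinuousLinearMap.proj_apply, ContinuousLinearMap.coe_fst',
      ContinuousLinearMap.coe_snd', hLA, hLB, smul_eq_mul, Pi.single_apply, pow_one,
      key z.2 i]
    simp only [mul_ite, mul_one, mul_zero, ite_mul, zero_mul, zero_add, add_zero,
      Pi.zero_apply]
    rw [Finset.sum_add_distrib]
    simp only [Finset.sum_ite_eq', Finset.mem_univ, if_true]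
    rw [mul_add, Finset.mul_sum]
    ring_nf
  unfold pbracket
  refine Finset.sum_eq_zero fun i _ => ?_
  rw [hP k i, hP l i, hQ k i, hQ l i]
  ring

/-- the Stäckel integrals
`I k (p,q) = ∑ j, c_{jk}(q) (p_j^2 + U_j(q_j))`, where `c = S(q)⁻¹` and `S(q)`
is an everywhere invertible Stäckel matrix (`S(q)_{kj} = s_{kj}(q_j)`), are
pairwise in involution for the canonical Poisson bracket. -/
theorem stmt_3 (n : ℕ) (s : Fin n → Fin n → ℝ → ℝ)
    (hs : ∀ k j, ContDiff ℝ (⊤ : ℕ∞) (s k j))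
    (U : Fin n → ℝ → ℝ) (hU : ∀ j, ContDiff ℝ (⊤ : ℕ∞) (U j))
    (S : (Fin n → ℝ) → Matrix (Fin n) (Fin n) ℝ)
    (hS : ∀ q k j, S q k j = s k j (q j))
    (hinv : ∀ q : Fin n → ℝ, IsUnit (S q).det)
    (c : (Fin n → ℝ) → Fin n → Fin n → ℝ)
    (hc : ∀ q j k, c q j k = (S q)⁻¹ j k)
    (I : Fin n → (Fin n → ℝ) × (Fin n → ℝ) → ℝ)
    (hI : ∀ k z, I k z = ∑ j, c z.2 j k * ((z.1 j) ^ 2 + U j (z.2 j))) :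
    ∀ k l, ∀ z : (Fin n → ℝ) × (Fin n → ℝ), pbracket (I k) (I l) z = 0 := by
  classical
  have hSdiff : ∀ a b, Differentiable ℝ fun q : Fin n → ℝ => S q a b := by
    intro a b
    simp only [hS]
    exact ((hs a b).differentiable (by simp)).comp
      (ContinuousLinearMap.proj b : (Fin n → ℝ) →L[ℝ] ℝ).differentiable
  have hdetgen : ∀ (M : (Fin n → ℝ) → Matrix (Fin n) (Fin n) ℝ),
      (∀ a b, Differentiable ℝ fun q => M q a b) →
      Differentiable ℝ fun q => (M q).det := by
    intro M h
    simp only [Matrix.det_apply']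
    refine Differentiable.fun_sum fun σ _ => Differentiable.const_mul (fun x => ?_) _
    exact (HasFDerivAt.finset_prod (u := Finset.univ) (g := fun i x => M x (σ i) i)
      (fun i _ => ((h (σ i) i) x).hasFDerivAt)).differentiableAt
  have hdet : Differentiable ℝ fun q => (S q).det := hdetgen S hSdiff
  have hdetne : ∀ q, (S q).det ≠ 0 := fun q => (hinv q).ne_zero
  have hadj : ∀ a b, Differentiable ℝ fun q => (S q).adjugate a b := by
    intro a b
    simp only [Matrix.adjugate_apply]
    refine hdetgen _ fun x y => ?_
    simp only [Matrix.updateRow_apply]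
    split
    · exact differentiable_const _
    · exact hSdiff x y
  have hcdiff : ∀ a b, Differentiable ℝ fun q => c q a b := by
    intro a b
    have hrw : (fun q => c q a b) = fun q => ((S q).det)⁻¹ * (S q).adjugate a b := by
      funext q
      rw [hc, Matrix.inv_def, Ring.inverse_eq_inv', Matrix.smul_apply, smul_eq_mul]
    rw [hrw]
    exact (hdet.inv hdetne).mul (hadj a b)
  exact fun k l z => stackel_final n s U hU c hcdiff
    (fun q i a m => stackel_key n s hs S hS hinv c hc hcdiff q i a m) I hI k l z
end

section
/- Let S(q) be a Stäckel matrix (invertible for all q, inverse entries c_{jk}(q)), let U_j, W_j : ℝ → ℝ be smooth potentials, and let I_k(p,q) = Σ_j c_{jk}(q)(p_j² + U_j(q_j)), J_k(p,q) = Σ_j c_{jk}(q)(p_j² + W_j(q_j)) be the two families of Stäckel integrals. Fix an index m and consider the open set Ω = {(p,q) : J_m(p,q) ≠ 0}. Define on Ω the functions K_m = I_m/J_m and K_j = K_m·J_j − I_j for j ≠ m. Then the n functions K_m, K_j (j ≠ m) are pairwise in involution on Ω: all their pairwise canonical Poisson brackets vanish at every point of Ω. -/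
open Finset Matrix


lemma pbracket_anti (f g : (Fin n → ℝ) × (Fin n → ℝ) → ℝ) (z) :
    pbracket f g z = - pbracket g f z := by
  unfold pbracket
  rw [← Finset.sum_neg_distrib]
  exact Finset.sum_congr rfl fun i _ => by ring

lemma pbracket_self (f : (Fin n → ℝ) × (Fin n → ℝ) → ℝ) (z) :
    pbracket f f z = 0 := by
  unfold pbracket
  exact Finset.sum_eq_zero fun i _ => by ring

lemma pbracket_sub_left {f g h : (Fin n → ℝ) × (Fin n → ℝ) → ℝ} {z}
    (hf : DifferentiableAt ℝ f z) (hg : DifferentiableAt ℝ g z) :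
    pbracket (fun w => f w - g w) h z = pbracket f h z - pbracket g h z := by
  unfold pbracket
  rw [← Finset.sum_sub_distrib]
  refine Finset.sum_congr rfl fun i _ => ?_
  rw [fderiv_fun_sub hf hg]
  simp only [ContinuousLinearMap.sub_apply]
  ring

lemma pbracket_mul_left {f g h : (Fin n → ℝ) × (Fin n → ℝ) → ℝ} {z}
    (hf : DifferentiableAt ℝ f z) (hg : DifferentiableAt ℝ g z) :
    pbracket (fun w => f w * g w) h z = f z * pbracket g h z + g z * pbracket f h z := by
  unfold pbracket
  rw [Finset.mul_sum, Finset.mul_sum, ← Finset.sum_add_distrib]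
  refine Finset.sum_congr rfl fun i _ => ?_
  rw [fderiv_fun_mul hf hg]
  simp only [ContinuousLinearMap.add_apply, ContinuousLinearMap.smul_apply, smul_eq_mul]
  ring

lemma hasFDerivAt_div' {f g : (Fin n → ℝ) × (Fin n → ℝ) → ℝ}
    {f' g' : ((Fin n → ℝ) × (Fin n → ℝ)) →L[ℝ] ℝ} {z}
    (hf : HasFDerivAt f f' z) (hg : HasFDerivAt g g' z) (h0 : g z ≠ 0) :
    HasFDerivAt (fun w => f w / g w) ((g z)⁻¹ • f' + (-f z / (g z)^2) • g') z := by
  have hinv : HasFDerivAt (fun w => (g w)⁻¹) ((-1 / (g z)^2) • g') z := by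
    have h1 : HasDerivAt (fun y : ℝ => y⁻¹) (-(g z ^ 2)⁻¹) (g z) := hasDerivAt_inv h0
    have h2 : HasFDerivAt ((fun y : ℝ => y⁻¹) ∘ g) ((-(g z ^ 2)⁻¹ : ℝ) • g') z :=
      h1.comp_hasFDerivAt z hg
    refine h2.congr_fderiv ?_
    refine ContinuousLinearMap.ext fun v => ?_
    simp only [ContinuousLinearMap.smul_apply, smul_eq_mul]
    ring
  have := hf.mul hinv
  simp only [div_eq_mul_inv]
  refine this.congr_fderiv ?_
  refine ContinuousLinearMap.ext fun v => ?_
  simp only [ContinuousLinearMap.add_apply, ContinuousLinearMap.smul_apply, smul_eq_mul]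
  field_simp
  ring

lemma pbracket_div_left {f g h : (Fin n → ℝ) × (Fin n → ℝ) → ℝ} {z}
    (hf : DifferentiableAt ℝ f z) (hg : DifferentiableAt ℝ g z) (h0 : g z ≠ 0) :
    pbracket (fun w => f w / g w) h z =
      (g z * pbracket f h z - f z * pbracket g h z) / (g z)^2 := by
  unfold pbracket
  rw [(hasFDerivAt_div' hf.hasFDerivAt hg.hasFDerivAt h0).fderiv]
  rw [Finset.mul_sum, Finset.mul_sum, ← Finset.sum_sub_distrib, Finset.sum_div]
  refine Finset.sum_congr rfl fun i _ => ?_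
  simp only [ContinuousLinearMap.add_apply, ContinuousLinearMap.smul_apply, smul_eq_mul]
  field_simp
  ring




lemma diff_det {M : (Fin n → ℝ) → Matrix (Fin n) (Fin n) ℝ}
    (h : ∀ a b, Differentiable ℝ fun q => M q a b) :
    Differentiable ℝ fun q => (M q).det := by
  have hfun : (fun q => (M q).det)
      = fun q => ∑ σ : Equiv.Perm (Fin n), ((Equiv.Perm.sign σ : ℤ) : ℝ) * ∏ i, M q (σ i) i :=
    funext fun q => by rw [Matrix.det_apply']
  rw [hfun]
  intro q
  refine DifferentiableAt.fun_sum fun σ _ => DifferentiableAt.const_mul ?_ _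
  exact (HasFDerivAt.finset_prod (fun i _ => ((h (σ i) i) q).hasFDerivAt)).differentiableAt

section S
variable {s : Fin n → Fin n → ℝ → ℝ} {S : (Fin n → ℝ) → Matrix (Fin n) (Fin n) ℝ}

lemma diff_entry (hs : ∀ k j, ContDiff ℝ (⊤ : ℕ∞) (s k j)) (hS : ∀ q k j, S q k j = s k j (q j))
    (a b : Fin n) : Differentiable ℝ fun q : Fin n → ℝ => S q a b := by
  have hfun : (fun q : Fin n → ℝ => S q a b) = fun q => s a b (q b) := funext fun q => hS q a b
  rw [hfun]
  exact ((hs a b).differentiable (by simp)).comp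
    ((ContinuousLinearMap.proj (R := ℝ) (φ := fun _ : Fin n => ℝ) b).differentiable)

lemma diff_cinv (hs : ∀ k j, ContDiff ℝ (⊤ : ℕ∞) (s k j)) (hS : ∀ q k j, S q k j = s k j (q j))
    (hinv : ∀ q : Fin n → ℝ, IsUnit (S q).det) (j k : Fin n) :
    Differentiable ℝ fun q => (S q)⁻¹ j k := by
  have hdet : Differentiable ℝ fun q => (S q).det := diff_det (diff_entry hs hS)
  have hadj : Differentiable ℝ fun q => (S q).adjugate j k := by
    have hfun : (fun q => (S q).adjugate j k)
        = fun q => ((S q).updateRow k (Pi.single j 1)).det :=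
      funext fun q => by rw [Matrix.adjugate_apply]
    rw [hfun]
    refine diff_det fun a b => ?_
    by_cases hak : a = k
    · subst hak
      simpa [Matrix.updateRow_apply] using differentiable_const (Pi.single j (1:ℝ) b)
    · have : (fun q => ((S q).updateRow k (Pi.single j 1)) a b) = fun q => S q a b :=
        funext fun q => by rw [Matrix.updateRow_apply]; simp [hak]
      rw [this]; exact diff_entry hs hS a b
  have hfun : (fun q => (S q)⁻¹ j k) = fun q => ((S q).det)⁻¹ * (S q).adjugate j k := by
    funext q
    rw [Matrix.inv_def, Matrix.smul_apply, Ring.inverse_eq_inv', smul_eq_mul]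
  rw [hfun]
  intro q
  exact ((hdet q).inv (isUnit_iff_ne_zero.mp (hinv q))).mul (hadj q)

lemma entry_hasFDerivAt (hs : ∀ k j, ContDiff ℝ (⊤ : ℕ∞) (s k j)) (hS : ∀ q k j, S q k j = s k j (q j))
    (b l' : Fin n) (q0 : Fin n → ℝ) :
    HasFDerivAt (fun q : Fin n → ℝ => S q b l')
      ((deriv (s b l') (q0 l')) • (ContinuousLinearMap.proj (R := ℝ) (φ := fun _ : Fin n => ℝ) l'))
      q0 := by
  have hfun : (fun q : Fin n → ℝ => S q b l') = (s b l') ∘ (fun q : Fin n → ℝ => q l') :=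
    funext fun q => hS q b l'
  rw [hfun]
  have h1 : HasDerivAt (s b l') (deriv (s b l') (q0 l')) (q0 l') :=
    (((hs b l').differentiable (by simp)) (q0 l')).hasDerivAt
  exact h1.comp_hasFDerivAt q0
    ((ContinuousLinearMap.proj (R := ℝ) (φ := fun _ : Fin n => ℝ) l').hasFDerivAt)

lemma c_partial (hs : ∀ k j, ContDiff ℝ (⊤ : ℕ∞) (s k j)) (hS : ∀ q k j, S q k j = s k j (q j))
    (hinv : ∀ q : Fin n → ℝ, IsUnit (S q).det) (q0 : Fin n → ℝ) (i j l : Fin n) :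
    fderiv ℝ (fun q => (S q)⁻¹ j l) q0 (Pi.single i 1)
      = -(∑ a, (S q0)⁻¹ j a * deriv (s a i) (q0 i)) * (S q0)⁻¹ i l := by
  set g : Fin n → ℝ := fun b => fderiv ℝ (fun q => (S q)⁻¹ j b) q0 (Pi.single i 1) with hg
  have key : ∀ l' : Fin n, ∑ b, S q0 b l' * g b
      = -(if l' = i then ∑ b, (S q0)⁻¹ j b * deriv (s b i) (q0 i) else 0) := by
    intro l'
    have hD : HasFDerivAt (fun q => ∑ b, (S q)⁻¹ j b * S q b l')
        (∑ b, ((S q0)⁻¹ j b • ((deriv (s b l') (q0 l')) •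
            (ContinuousLinearMap.proj (R := ℝ) (φ := fun _ : Fin n => ℝ) l'))
          + S q0 b l' • fderiv ℝ (fun q => (S q)⁻¹ j b) q0)) q0 := by
      refine HasFDerivAt.fun_sum fun b _ => ?_
      exact ((diff_cinv hs hS hinv j b) q0).hasFDerivAt.mul (entry_hasFDerivAt hs hS b l' q0)
    have hconst : HasFDerivAt (fun q => ∑ b, (S q)⁻¹ j b * S q b l')
        (0 : (Fin n → ℝ) →L[ℝ] ℝ) q0 := by
      have hfun : (fun q : Fin n → ℝ => ∑ b, (S q)⁻¹ j b * S q b l')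
          = fun _ => (1 : Matrix (Fin n) (Fin n) ℝ) j l' := by
        funext q
        rw [← Matrix.mul_apply, Matrix.nonsing_inv_mul _ (hinv q)]
      rw [hfun]
      exact hasFDerivAt_const _ _
    have huniq := hD.unique hconst
    have heval := congrArg (fun L : (Fin n → ℝ) →L[ℝ] ℝ => L (Pi.single i 1)) huniq
    simp only [ContinuousLinearMap.sum_apply, ContinuousLinearMap.add_apply,
      ContinuousLinearMap.smul_apply, ContinuousLinearMap.proj_apply,
      ContinuousLinearMap.zero_apply, smul_eq_mul, Pi.single_apply] at heval
    rw [Finset.sum_add_distrib] at heval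
    by_cases hl : l' = i
    · subst hl
      simp only [hg, if_pos rfl, if_true, mul_one] at heval ⊢
      linarith [heval]
    · simp only [hg, if_neg hl, mul_zero, neg_zero] at heval ⊢
      simpa using heval
  have hgl : fderiv ℝ (fun q => (S q)⁻¹ j l) q0 (Pi.single i 1)
      = ∑ l', (∑ b, S q0 b l' * g b) * (S q0)⁻¹ l' l := by
    have h2 : ∑ l', (∑ b, S q0 b l' * g b) * (S q0)⁻¹ l' l
        = ∑ b, g b * ((S q0) * (S q0)⁻¹) b l := by
      simp_rw [Finset.sum_mul, Matrix.mul_apply, Finset.mul_sum]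
      rw [Finset.sum_comm]
      exact Finset.sum_congr rfl fun b _ => Finset.sum_congr rfl fun l' _ => by ring
    rw [h2, Matrix.mul_nonsing_inv _ (hinv q0)]
    simp [Matrix.one_apply, hg]
  rw [hgl]
  simp_rw [key]
  rw [Finset.sum_eq_single i]
  · simp
  · intro b _ hb; simp [hb]
  · intro h; simp at h

end S



@[reducible] noncomputable def PprojL (n : ℕ) (j : Fin n) : ((Fin n → ℝ) × (Fin n → ℝ)) →L[ℝ] ℝ :=
  (ContinuousLinearMap.proj (R := ℝ) (φ := fun _ : Fin n => ℝ) j).comp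
    (ContinuousLinearMap.fst ℝ (Fin n → ℝ) (Fin n → ℝ))

@[reducible] noncomputable def QprojL (n : ℕ) (j : Fin n) : ((Fin n → ℝ) × (Fin n → ℝ)) →L[ℝ] ℝ :=
  (ContinuousLinearMap.proj (R := ℝ) (φ := fun _ : Fin n => ℝ) j).comp
    (ContinuousLinearMap.snd ℝ (Fin n → ℝ) (Fin n → ℝ))

@[simp] lemma PprojL_apply {n : ℕ} (j : Fin n) (v : (Fin n → ℝ) × (Fin n → ℝ)) :
    PprojL n j v = v.1 j := rfl

@[simp] lemma QprojL_apply {n : ℕ} (j : Fin n) (v : (Fin n → ℝ) × (Fin n → ℝ)) :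
    QprojL n j v = v.2 j := rfl



section S
variable {s : Fin n → Fin n → ℝ → ℝ} {S : (Fin n → ℝ) → Matrix (Fin n) (Fin n) ℝ}


lemma integral_hasFDerivAt (hs : ∀ k j, ContDiff ℝ (⊤ : ℕ∞) (s k j))
    (hS : ∀ q k j, S q k j = s k j (q j))
    (hinv : ∀ q : Fin n → ℝ, IsUnit (S q).det)
    {V : Fin n → ℝ → ℝ} (hV : ∀ j, ContDiff ℝ (⊤ : ℕ∞) (V j))
    {F : (Fin n → ℝ) × (Fin n → ℝ) → ℝ} {k : Fin n}
    (hF : ∀ z, F z = ∑ j, (S z.2)⁻¹ j k * ((z.1 j) ^ 2 + V j (z.2 j)))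
    (z : (Fin n → ℝ) × (Fin n → ℝ)) :
    HasFDerivAt F
      (∑ j, ((S z.2)⁻¹ j k •
          ((z.1 j • PprojL n j + z.1 j • PprojL n j) + deriv (V j) (z.2 j) • QprojL n j)
        + ((z.1 j) ^ 2 + V j (z.2 j)) •
          ((fderiv ℝ (fun q => (S q)⁻¹ j k) z.2).comp
            (ContinuousLinearMap.snd ℝ (Fin n → ℝ) (Fin n → ℝ))))) z := by
  have hfun : F = fun z => ∑ j, (S z.2)⁻¹ j k * ((z.1 j) * (z.1 j) + V j (z.2 j)) := by
    funext w; rw [hF w]; exact Finset.sum_congr rfl fun j _ => by ring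
  rw [hfun]
  refine HasFDerivAt.fun_sum fun j _ => ?_
  have hc : HasFDerivAt (fun w : (Fin n → ℝ) × (Fin n → ℝ) => (S w.2)⁻¹ j k)
      ((fderiv ℝ (fun q => (S q)⁻¹ j k) z.2).comp
        (ContinuousLinearMap.snd ℝ (Fin n → ℝ) (Fin n → ℝ))) z :=
    HasFDerivAt.comp z ((diff_cinv hs hS hinv j k) z.2).hasFDerivAt hasFDerivAt_snd
  have hp : HasFDerivAt (fun w : (Fin n → ℝ) × (Fin n → ℝ) => w.1 j) (PprojL n j) z :=
    ContinuousLinearMap.hasFDerivAt (PprojL n j)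
  have hu : HasFDerivAt (fun w : (Fin n → ℝ) × (Fin n → ℝ) => V j (w.2 j))
      (deriv (V j) (z.2 j) • QprojL n j) z := by
    have h1 : HasDerivAt (V j) (deriv (V j) (z.2 j)) (z.2 j) :=
      (((hV j).differentiable (by simp)) (z.2 j)).hasDerivAt
    exact h1.comp_hasFDerivAt z (ContinuousLinearMap.hasFDerivAt (QprojL n j))
  have hsq := hp.fun_mul hp
  simpa only [← pow_two] using hc.fun_mul (hsq.fun_add hu)

lemma integral_fderiv_apply (hs : ∀ k j, ContDiff ℝ (⊤ : ℕ∞) (s k j))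
    (hS : ∀ q k j, S q k j = s k j (q j))
    (hinv : ∀ q : Fin n → ℝ, IsUnit (S q).det)
    {V : Fin n → ℝ → ℝ} (hV : ∀ j, ContDiff ℝ (⊤ : ℕ∞) (V j))
    {F : (Fin n → ℝ) × (Fin n → ℝ) → ℝ} {k : Fin n}
    (hF : ∀ z, F z = ∑ j, (S z.2)⁻¹ j k * ((z.1 j) ^ 2 + V j (z.2 j)))
    (z v : (Fin n → ℝ) × (Fin n → ℝ)) :
    fderiv ℝ F z v = ∑ j,
      (fderiv ℝ (fun q => (S q)⁻¹ j k) z.2 v.2 * ((z.1 j) ^ 2 + V j (z.2 j))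
        + (S z.2)⁻¹ j k * (2 * z.1 j * v.1 j + deriv (V j) (z.2 j) * v.2 j)) := by
  rw [(integral_hasFDerivAt hs hS hinv hV hF z).fderiv]
  simp only [ContinuousLinearMap.sum_apply, ContinuousLinearMap.add_apply,
    ContinuousLinearMap.smul_apply, ContinuousLinearMap.comp_apply,
    ContinuousLinearMap.coe_fst', ContinuousLinearMap.coe_snd',
    ContinuousLinearMap.proj_apply, smul_eq_mul, PprojL_apply, QprojL_apply]
  exact Finset.sum_congr rfl fun j _ => by ring

lemma integral_differentiable (hs : ∀ k j, ContDiff ℝ (⊤ : ℕ∞) (s k j))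
    (hS : ∀ q k j, S q k j = s k j (q j))
    (hinv : ∀ q : Fin n → ℝ, IsUnit (S q).det)
    {V : Fin n → ℝ → ℝ} (hV : ∀ j, ContDiff ℝ (⊤ : ℕ∞) (V j))
    {F : (Fin n → ℝ) × (Fin n → ℝ) → ℝ} {k : Fin n}
    (hF : ∀ z, F z = ∑ j, (S z.2)⁻¹ j k * ((z.1 j) ^ 2 + V j (z.2 j))) :
    Differentiable ℝ F :=
  fun z => (integral_hasFDerivAt hs hS hinv hV hF z).differentiableAt

end S





section S
variable {s : Fin n → Fin n → ℝ → ℝ} {S : (Fin n → ℝ) → Matrix (Fin n) (Fin n) ℝ}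



lemma integral_fderiv_p (hs : ∀ k j, ContDiff ℝ (⊤ : ℕ∞) (s k j))
    (hS : ∀ q k j, S q k j = s k j (q j))
    (hinv : ∀ q : Fin n → ℝ, IsUnit (S q).det)
    {V : Fin n → ℝ → ℝ} (hV : ∀ j, ContDiff ℝ (⊤ : ℕ∞) (V j))
    {F : (Fin n → ℝ) × (Fin n → ℝ) → ℝ} {k : Fin n}
    (hF : ∀ z, F z = ∑ j, (S z.2)⁻¹ j k * ((z.1 j) ^ 2 + V j (z.2 j)))
    (z : (Fin n → ℝ) × (Fin n → ℝ)) (i : Fin n) :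
    fderiv ℝ F z ((Pi.single i 1, 0)) = 2 * z.1 i * (S z.2)⁻¹ i k := by
  rw [integral_fderiv_apply hs hS hinv hV hF z]
  have h0 : ((Pi.single i 1, (0 : Fin n → ℝ)) : (Fin n → ℝ) × (Fin n → ℝ)).2 = 0 := rfl
  rw [Finset.sum_eq_single i]
  · simp [Pi.single_apply]; ring
  · intro b _ hb
    simp [Pi.single_apply, hb]
  · intro h; simp at h

lemma integral_fderiv_q (hs : ∀ k j, ContDiff ℝ (⊤ : ℕ∞) (s k j))
    (hS : ∀ q k j, S q k j = s k j (q j))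
    (hinv : ∀ q : Fin n → ℝ, IsUnit (S q).det)
    {V : Fin n → ℝ → ℝ} (hV : ∀ j, ContDiff ℝ (⊤ : ℕ∞) (V j))
    {F : (Fin n → ℝ) × (Fin n → ℝ) → ℝ} {k : Fin n}
    (hF : ∀ z, F z = ∑ j, (S z.2)⁻¹ j k * ((z.1 j) ^ 2 + V j (z.2 j)))
    (z : (Fin n → ℝ) × (Fin n → ℝ)) (i : Fin n) :
    fderiv ℝ F z ((0, Pi.single i 1)) = (S z.2)⁻¹ i k * deriv (V i) (z.2 i)
      - (S z.2)⁻¹ i k * ∑ j, (∑ a, (S z.2)⁻¹ j a * deriv (s a i) (z.2 i))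
          * ((z.1 j) ^ 2 + V j (z.2 j)) := by
  rw [integral_fderiv_apply hs hS hinv hV hF z]
  rw [Finset.sum_add_distrib]
  have h1 : ∑ j, fderiv ℝ (fun q => (S q)⁻¹ j k) z.2
        (((0 : Fin n → ℝ), Pi.single i 1) : (Fin n → ℝ) × (Fin n → ℝ)).2
        * ((z.1 j) ^ 2 + V j (z.2 j))
      = -((S z.2)⁻¹ i k * ∑ j, (∑ a, (S z.2)⁻¹ j a * deriv (s a i) (z.2 i))
          * ((z.1 j) ^ 2 + V j (z.2 j))) := by
    rw [Finset.mul_sum, ← Finset.sum_neg_distrib]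
    refine Finset.sum_congr rfl fun j _ => ?_
    rw [show (((0 : Fin n → ℝ), Pi.single i 1) : (Fin n → ℝ) × (Fin n → ℝ)).2
        = Pi.single i 1 from rfl]
    rw [c_partial hs hS hinv z.2 i j k]
    ring
  have h2 : ∑ j, (S z.2)⁻¹ j k *
        (2 * z.1 j * (((0 : Fin n → ℝ), Pi.single i 1) : (Fin n → ℝ) × (Fin n → ℝ)).1 j
          + deriv (V j) (z.2 j)
            * (((0 : Fin n → ℝ), Pi.single i 1) : (Fin n → ℝ) × (Fin n → ℝ)).2 j)
      = (S z.2)⁻¹ i k * deriv (V i) (z.2 i) := by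
    rw [Finset.sum_eq_single i]
    · simp [Pi.single_apply]
    · intro b _ hb
      simp [Pi.single_apply, hb]
    · intro h; simp at h
  rw [h1, h2]; ring

lemma bracketIJ (hs : ∀ k j, ContDiff ℝ (⊤ : ℕ∞) (s k j))
    (hS : ∀ q k j, S q k j = s k j (q j))
    (hinv : ∀ q : Fin n → ℝ, IsUnit (S q).det)
    {U W : Fin n → ℝ → ℝ} (hU : ∀ j, ContDiff ℝ (⊤ : ℕ∞) (U j)) (hW : ∀ j, ContDiff ℝ (⊤ : ℕ∞) (W j))
    {F G : (Fin n → ℝ) × (Fin n → ℝ) → ℝ} {k l : Fin n}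
    (hF : ∀ z, F z = ∑ j, (S z.2)⁻¹ j k * ((z.1 j) ^ 2 + U j (z.2 j)))
    (hG : ∀ z, G z = ∑ j, (S z.2)⁻¹ j l * ((z.1 j) ^ 2 + W j (z.2 j)))
    (z : (Fin n → ℝ) × (Fin n → ℝ)) :
    pbracket F G z = ∑ i, 2 * z.1 i * (S z.2)⁻¹ i k * (S z.2)⁻¹ i l *
      ((deriv (W i) (z.2 i) - deriv (U i) (z.2 i))
        + (∑ j, (∑ a, (S z.2)⁻¹ j a * deriv (s a i) (z.2 i)) * ((z.1 j) ^ 2 + U j (z.2 j))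
          - ∑ j, (∑ a, (S z.2)⁻¹ j a * deriv (s a i) (z.2 i)) * ((z.1 j) ^ 2 + W j (z.2 j)))) := by
  unfold pbracket
  refine Finset.sum_congr rfl fun i _ => ?_
  rw [integral_fderiv_p hs hS hinv hU hF z i, integral_fderiv_q hs hS hinv hU hF z i,
    integral_fderiv_p hs hS hinv hW hG z i, integral_fderiv_q hs hS hinv hW hG z i]
  ring

end S


/-- for two families of Stäckel integrals `I_k`, `J_k` built from
the same Stäckel matrix with potentials `U_j` and `W_j`, the functions
`K_m = I_m / J_m` and `K_j = K_m · J_j − I_j` (`j ≠ m`) are pairwise in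
involution on the open set `Ω = {J_m ≠ 0}`. -/
theorem stmt_5 (n : ℕ) (s : Fin n → Fin n → ℝ → ℝ)
    (hs : ∀ k j, ContDiff ℝ (⊤ : ℕ∞) (s k j))
    (U W : Fin n → ℝ → ℝ)
    (hU : ∀ j, ContDiff ℝ (⊤ : ℕ∞) (U j)) (hW : ∀ j, ContDiff ℝ (⊤ : ℕ∞) (W j))
    (S : (Fin n → ℝ) → Matrix (Fin n) (Fin n) ℝ)
    (hS : ∀ q k j, S q k j = s k j (q j))
    (hinv : ∀ q : Fin n → ℝ, IsUnit (S q).det)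
    (c : (Fin n → ℝ) → Fin n → Fin n → ℝ)
    (hc : ∀ q j k, c q j k = (S q)⁻¹ j k)
    (I J : Fin n → (Fin n → ℝ) × (Fin n → ℝ) → ℝ)
    (hI : ∀ k z, I k z = ∑ j, c z.2 j k * ((z.1 j) ^ 2 + U j (z.2 j)))
    (hJ : ∀ k z, J k z = ∑ j, c z.2 j k * ((z.1 j) ^ 2 + W j (z.2 j)))
    (m : Fin n)
    (K : Fin n → (Fin n → ℝ) × (Fin n → ℝ) → ℝ)
    (hKm : ∀ z, K m z = I m z / J m z)
    (hKj : ∀ j, j ≠ m → ∀ z, K j z = (I m z / J m z) * J j z - I j z) :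
    ∀ j k, ∀ z : (Fin n → ℝ) × (Fin n → ℝ), J m z ≠ 0 →
      pbracket (K j) (K k) z = 0 := by
  intro j k z hz
  -- rephrase I, J through S⁻¹
  have hI' : ∀ a w, I a w = ∑ j, (S w.2)⁻¹ j a * ((w.1 j) ^ 2 + U j (w.2 j)) := by
    intro a w; rw [hI a w]; exact Finset.sum_congr rfl fun j _ => by rw [hc]
  have hJ' : ∀ a w, J a w = ∑ j, (S w.2)⁻¹ j a * ((w.1 j) ^ 2 + W j (w.2 j)) := by
    intro a w; rw [hJ a w]; exact Finset.sum_congr rfl fun j _ => by rw [hc]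
  have hIdiff : ∀ a, Differentiable ℝ (I a) :=
    fun a => integral_differentiable hs hS hinv hU (hI' a)
  have hJdiff : ∀ a, Differentiable ℝ (J a) :=
    fun a => integral_differentiable hs hS hinv hW (hJ' a)
  -- symmetry of the mixed brackets, vanishing of the pure brackets
  have hBsym : ∀ a b (w : (Fin n → ℝ) × (Fin n → ℝ)),
      pbracket (I a) (J b) w = pbracket (I b) (J a) w := by
    intro a b w
    rw [bracketIJ hs hS hinv hU hW (hI' a) (hJ' b) w,
      bracketIJ hs hS hinv hU hW (hI' b) (hJ' a) w]
    exact Finset.sum_congr rfl fun i _ => by ring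
  have hII : ∀ a b (w : (Fin n → ℝ) × (Fin n → ℝ)), pbracket (I a) (I b) w = 0 := by
    intro a b w
    rw [bracketIJ hs hS hinv hU hU (hI' a) (hI' b) w]
    exact Finset.sum_eq_zero fun i _ => by ring
  have hJJ : ∀ a b (w : (Fin n → ℝ) × (Fin n → ℝ)), pbracket (J a) (J b) w = 0 := by
    intro a b w
    rw [bracketIJ hs hS hinv hW hW (hJ' a) (hJ' b) w]
    exact Finset.sum_eq_zero fun i _ => by ring
  -- the quotient function
  have hFm : K m = fun w => I m w / J m w := funext hKm
  have hKa : ∀ a, a ≠ m → K a = fun w => (I m w / J m w) * J a w - I a w :=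
    fun a ha => funext (hKj a ha)
  have hdF : DifferentiableAt ℝ (fun w => I m w / J m w) z :=
    (hasFDerivAt_div' (hIdiff m z).hasFDerivAt (hJdiff m z).hasFDerivAt hz).differentiableAt
  have c1 : ∀ h, pbracket (K m) h z
      = (J m z * pbracket (I m) h z - I m z * pbracket (J m) h z) / (J m z) ^ 2 := by
    intro h
    rw [hFm]
    exact pbracket_div_left (hIdiff m z) (hJdiff m z) hz
  have c2 : ∀ b, pbracket (K m) (J b) z = pbracket (I m) (J b) z / J m z := by
    intro b
    rw [c1, hJJ m b z]
    field_simp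
    ring
  have c3 : ∀ b, pbracket (K m) (I b) z
      = I m z * pbracket (I b) (J m) z / (J m z) ^ 2 := by
    intro b
    rw [c1, hII m b z, pbracket_anti (J m) (I b) z, pbracket_anti (I b) (J m) z]
    ring
  have c4 : ∀ b, b ≠ m → pbracket (K m) (K b) z = 0 := by
    intro b hb
    rw [pbracket_anti, hKa b hb,
      pbracket_sub_left (f := fun w => I m w / J m w * J b w) (hdF.mul (hJdiff b z)) (hIdiff b z),
      pbracket_mul_left hdF (hJdiff b z), ← hFm,
      pbracket_anti (J b) (K m) z, c2 b,
      pbracket_anti (I b) (K m) z, c3 b,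
      pbracket_self, hBsym b m]
    field_simp
    ring
  have c5 : ∀ a b, a ≠ m → b ≠ m → pbracket (K a) (K b) z = 0 := by
    intro a b ha hb
    have hJaKb : pbracket (J a) (K b) z
        = -(J b z * (pbracket (I m) (J a) z / J m z) - pbracket (I b) (J a) z) := by
      rw [pbracket_anti (J a) (K b) z, hKa b hb,
        pbracket_sub_left (f := fun w => I m w / J m w * J b w) (hdF.mul (hJdiff b z)) (hIdiff b z),
        pbracket_mul_left hdF (hJdiff b z), ← hFm, hJJ b a z, c2 a]
      ring
    have hIaKb : pbracket (I a) (K b) z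
        = -((I m z / J m z) * (- pbracket (I a) (J b) z)
            + J b z * (I m z * pbracket (I a) (J m) z / (J m z) ^ 2)) := by
      rw [pbracket_anti (I a) (K b) z, hKa b hb,
        pbracket_sub_left (f := fun w => I m w / J m w * J b w) (hdF.mul (hJdiff b z)) (hIdiff b z),
        pbracket_mul_left hdF (hJdiff b z), ← hFm, hII b a z,
        pbracket_anti (J b) (I a) z, c3 a]
      ring
    rw [hKa a ha,
      pbracket_sub_left (f := fun w => I m w / J m w * J a w) (hdF.mul (hJdiff a z)) (hIdiff a z),
      pbracket_mul_left hdF (hJdiff a z), ← hFm, c4 b hb, hJaKb, hIaKb,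
      hBsym a m, hBsym a b]
    field_simp
    ring
  by_cases hjm : j = m
  · by_cases hkm : k = m
    · subst hjm; subst hkm; exact pbracket_self _ _
    · subst hjm; exact c4 k hkm
  · by_cases hkm : k = m
    · subst hkm
      rw [pbracket_anti]
      rw [c4 j hjm]
      ring
    · exact c5 j k hjm hkm
end

section
/- Let A be an associative unital algebra over a field k of characteristic zero, and let e, f, h ∈ A satisfy [h,e] = e, [h,f] = −f, [e,f] = 2h, with e invertible in A. Let Δ = h² + (ef + fe)/2 be the Casimir element, let P ∈ k[X] be a polynomial, and set f' = f + e^{-1}·P(Δ), where P(Δ) is the evaluation of P at Δ. Then the triple (e, f', h) satisfies the same sl(2) relations: [h,e] = e, [h,f'] = −f', and [e,f'] = 2h. -/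
/-!
Both `e` and `h` commute with the Casimir element `Δ`, hence with `Q = P(Δ)`. Since `e⁻¹` commutes
with `e` and has `h`-weight `-1` (like `f`), the correction `e⁻¹ Q` has the same bracket with `h` as
`f`, while its bracket with `e` vanishes.
-/

section Sl2

attribute [local instance] LieRing.ofAssociativeRing

variable {A : Type*} [Ring A]

theorem lie_mul_right (a b c : A) : ⁅a, b * c⁆ = ⁅a, b⁆ * c + b * ⁅a, c⁆ := by
  simp only [Ring.lie_def]
  noncomm_ring

theorem lie_eq_neg_mul_lie_mul_of_mul_eq_one {x a b : A} (hab : a * b = 1) (hba : b * a = 1) :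
    ⁅x, b⁆ = -(b * ⁅x, a⁆ * b) := by
  have hx : ⁅x, a⁆ * b + a * ⁅x, b⁆ = 0 := by
    rw [← lie_mul_right, hab, Ring.lie_def, mul_one, one_mul, sub_self]
  calc ⁅x, b⁆ = b * (⁅x, a⁆ * b + a * ⁅x, b⁆) - b * ⁅x, a⁆ * b := by
        rw [mul_add, ← mul_assoc b a, hba, one_mul, mul_assoc]; abel
    _ = -(b * ⁅x, a⁆ * b) := by rw [hx, mul_zero, zero_sub]

theorem Commute.aeval_right {k : Type*} [CommSemiring k] [Algebra k A] {x y : A}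
    (hxy : Commute x y) (P : Polynomial k) : Commute x (Polynomial.aeval y P) := by
  have hP : Polynomial.aeval y P ∈ Subalgebra.centralizer k {x} :=
    Algebra.adjoin_le (by simpa [Set.mem_centralizer_iff] using hxy.eq)
      (Polynomial.aeval_mem_adjoin_singleton k y)
  exact (Subalgebra.mem_centralizer_iff k).mp hP x rfl

/-- Normalized with `h` half of the `h` in Mathlib's `IsSl2Triple`, and `h = 0` allowed. -/
structure Sl2Relations (e f h : A) : Prop where
  lie_h_e : ⁅h, e⁆ = e
  lie_h_f : ⁅h, f⁆ = -f
  lie_e_f : ⁅e, f⁆ = 2 * h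

def casimir (k : Type*) [Field k] [Algebra k A] (e f h : A) : A :=
  h ^ 2 + (2⁻¹ : k) • (e * f + f * e)

namespace Sl2Relations

variable {k : Type*} [Field k] [Algebra k A] {e f h : A}

theorem commute_h_casimir (hs : Sl2Relations e f h) : Commute h (casimir k e f h) := by
  have hu : ⁅h, e * f + f * e⁆ = 0 := by
    rw [lie_add, lie_mul_right, lie_mul_right, hs.lie_h_e, hs.lie_h_f]
    noncomm_ring
  rw [commute_iff_lie_eq, casimir, lie_add, lie_smul (2⁻¹ : k), hu, smul_zero, add_zero,
    Ring.lie_def, pow_two]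
  noncomm_ring

theorem commute_e_casimir [NeZero (2 : k)] (hs : Sl2Relations e f h) :
    Commute e (casimir k e f h) := by
  have heh : ⁅e, h⁆ = -e := by rw [← lie_skew, hs.lie_h_e]
  have hu : ⁅e, e * f + f * e⁆ = (2 : k) • (e * h + h * e) := by
    rw [lie_add, lie_mul_right, lie_mul_right, hs.lie_e_f, lie_self, two_smul]
    noncomm_ring
  rw [commute_iff_lie_eq, casimir, lie_add, lie_smul (2⁻¹ : k), hu, smul_smul,
    inv_mul_cancel₀ two_ne_zero, one_smul, pow_two, lie_mul_right, heh]
  noncomm_ring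

theorem add_inv_mul {ei Q : A} (hs : Sl2Relations e f h) (hei : e * ei = 1) (hei' : ei * e = 1)
    (hQe : Commute e Q) (hQh : Commute h Q) : Sl2Relations e (f + ei * Q) h where
  lie_h_e := hs.lie_h_e
  lie_h_f := by
    have hh_ei : ⁅h, ei⁆ = -ei := by
      rw [lie_eq_neg_mul_lie_mul_of_mul_eq_one hei hei', hs.lie_h_e, hei', one_mul]
    rw [lie_add, lie_mul_right, hs.lie_h_f, hh_ei, hQh.lie_eq, mul_zero, add_zero, neg_mul,
      neg_add]
  lie_e_f := by
    have he_ei : ⁅e, ei⁆ = 0 := by rw [Ring.lie_def, hei, hei', sub_self]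
    rw [lie_add, lie_mul_right, hs.lie_e_f, he_ei, hQe.lie_eq, zero_mul, mul_zero, add_zero,
      add_zero]

end Sl2Relations

end Sl2

/-- with `e, f, h` satisfying the `sl(2)` relations, `e` invertible
with two-sided inverse `ei`, `Δ = h² + (ef + fe)/2` the Casimir element and
`P` a polynomial, the shifted triple `(e, f' = f + e⁻¹·P(Δ), h)` satisfies the
same `sl(2)` relations. -/
theorem stmt_8 {k : Type*} [Field k] [CharZero k]
    {A : Type*} [Ring A] [Algebra k A]
    (e f h : A)
    (he : h * e - e * h = e)
    (hf : h * f - f * h = -f)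
    (hef : e * f - f * e = 2 * h)
    (ei : A) (hei : e * ei = 1) (hei' : ei * e = 1)
    (Δ : A) (hΔ : Δ = h ^ 2 + (2⁻¹ : k) • (e * f + f * e))
    (P : Polynomial k)
    (f' : A) (hf' : f' = f + ei * Polynomial.aeval Δ P) :
    h * e - e * h = e ∧ h * f' - f' * h = -f' ∧ e * f' - f' * e = 2 * h := by
  have hs : Sl2Relations e f h := ⟨he, hf, hef⟩
  subst hΔ hf'
  have hs' := hs.add_inv_mul hei hei' ((hs.commute_e_casimir (k := k)).aeval_right P)
    ((hs.commute_h_casimir (k := k)).aeval_right P)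
  exact ⟨hs'.lie_h_e, hs'.lie_h_f, hs'.lie_e_f⟩
end

section
/- Let A be an associative unital algebra over a field k of characteristic zero, and let e, f, h ∈ A satisfy [h,e] = e, [h,f] = −f, [e,f] = 2h, with e invertible. Let Δ = h² + (ef + fe)/2, let P ∈ k[X], and set f' = f + e^{-1}·P(Δ). Then the Casimir element of the new triple (e, f', h) equals Δ' := h² + (ef' + f'e)/2 = Δ + P(Δ). In particular, if P(X) = −(X + b·1) for a scalar b ∈ k, then Δ' = −b·1. -/
lemma commute_aeval' {k A : Type*} [CommSemiring k] [Ring A] [Algebra k A]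
    {a b : A} (hab : Commute a b) (p : Polynomial k) :
    Commute a (Polynomial.aeval b p) := by
  induction p using Polynomial.induction_on' with
  | add p q hp hq => simpa using hp.add_right hq
  | monomial n c =>
      simp only [Polynomial.aeval_monomial]
      have hc : Commute a (algebraMap k A c) := (Algebra.commutes' c a).symm
      exact hc.mul_right (hab.pow_right n)

/-- with `e, f, h` satisfying the `sl(2)` relations, `e`
invertible, `Δ` the Casimir element and `f' = f + e⁻¹·P(Δ)`, the Casimir of
the new triple `(e, f', h)` is `Δ' = Δ + P(Δ)`; in particular for
`P(X) = −(X + b·1)` one gets `Δ' = −b·1`. -/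
theorem stmt_9 {k : Type*} [Field k] [CharZero k]
    {A : Type*} [Ring A] [Algebra k A]
    (e f h : A)
    (he : h * e - e * h = e)
    (hf : h * f - f * h = -f)
    (hef : e * f - f * e = 2 * h)
    (ei : A) (hei : e * ei = 1) (hei' : ei * e = 1)
    (Δ : A) (hΔ : Δ = h ^ 2 + (2⁻¹ : k) • (e * f + f * e))
    (P : Polynomial k)
    (f' : A) (hf' : f' = f + ei * Polynomial.aeval Δ P) :
    h ^ 2 + (2⁻¹ : k) • (e * f' + f' * e) = Δ + Polynomial.aeval Δ P ∧
      (∀ b : k, P = -(Polynomial.X + Polynomial.C b) →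
        h ^ 2 + (2⁻¹ : k) • (e * f' + f' * e) = -(b • (1 : A))) := by
  have key : ∀ x : A, (2⁻¹ : k) • (2 * x) = x := by
    intro x
    have h2 : (2 : A) * x = (2 : k) • x := by
      rw [Algebra.smul_def, map_ofNat]
    rw [h2, smul_smul]
    norm_num
  have h1 : h * e = e * h + e := by rw [eq_add_of_sub_eq he]; abel
  -- e commutes with Δ
  have hA1 : h ^ 2 * e = e * h ^ 2 + (2 * (e * h) + e) := by
    calc h ^ 2 * e = h * (h * e) := by rw [pow_two, mul_assoc]
      _ = h * (e * h) + (e * h + e) := by rw [h1, mul_add, h1]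
      _ = (e * h + e) * h + (e * h + e) := by rw [← mul_assoc, h1]
      _ = e * h ^ 2 + (2 * (e * h) + e) := by rw [pow_two]; noncomm_ring
  have hA2 : e * (e * f + f * e) = (e * f + f * e) * e + 2 * (2 * (e * h) + e) := by
    have hd : e * (e * f + f * e) - (e * f + f * e) * e
        = e * (e * f - f * e) + (e * f - f * e) * e := by noncomm_ring
    rw [hef] at hd
    have hd2 : e * (2 * h) + 2 * h * e = 2 * (2 * (e * h) + e) := by
      rw [show 2 * h * e = 2 * (h * e) by rw [mul_assoc], h1]; noncomm_ring
    rw [hd2] at hd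
    rw [eq_add_of_sub_eq hd]; abel
  have comm : Commute e Δ := by
    unfold Commute SemiconjBy
    rw [hΔ, mul_add, add_mul, hA1, mul_smul_comm, smul_mul_assoc, hA2, smul_add,
      key (2 * (e * h) + e)]
    abel
  set Q := Polynomial.aeval Δ P with hQ
  have heQ : e * Q = Q * e := commute_aeval' comm P
  have main : h ^ 2 + (2⁻¹ : k) • (e * f' + f' * e) = Δ + Q := by
    have expand : e * (f + ei * Q) + (f + ei * Q) * e = (e * f + f * e) + 2 * Q := by
      rw [mul_add, add_mul, ← mul_assoc, hei, one_mul, mul_assoc, ← heQ, ← mul_assoc,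
        hei', one_mul]
      noncomm_ring
    rw [hf', expand, smul_add, key Q, hΔ]
    abel
  refine ⟨main, fun b hb => ?_⟩
  rw [main, hQ, hb]
  simp only [map_neg, map_add, Polynomial.aeval_X, Polynomial.aeval_C,
    Algebra.algebraMap_eq_smul_one]
  abel
end
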